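/- For every integer d ≥ 2 and every integer l ≥ 0, g_{2d}(2l) ≥ g_d(l). -/

import Mathlib

open Set Real


/-- The auxiliary lower-bound function `g_d`: `g_d 0 = 1` and
`g_d l = g_d (l-1) · inf_{t ∈ (0,1)} ((1 + t·g_d(l-1))/(1-t))^{1/(t·d)}`. -/
noncomputable def gfun (d : ℕ) : ℕ → ℝ
  | 0 => 1
  | l + 1 =>
      gfun d l *
        sInf ((fun t : ℝ => ((1 + t * gfun d l) / (1 - t)) ^ (1 / (t * (d : ℝ)))) ''
          Set.Ioo 0 1)

noncomputable def Sset (d : ℕ) (a : ℝ) : Set ℝ :=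
  (fun t : ℝ => ((1 + t * a) / (1 - t)) ^ (1 / (t * (d : ℝ)))) '' Set.Ioo 0 1

noncomputable def Ffun (d : ℕ) (a : ℝ) : ℝ := sInf (Sset d a)

lemma gfun_succ (d : ℕ) (l : ℕ) : gfun d (l + 1) = gfun d l * Ffun d (gfun d l) := rfl

lemma base_pos {a t : ℝ} (ha : 0 ≤ a) (ht : t ∈ Ioo (0:ℝ) 1) :
    0 < (1 + t * a) / (1 - t) := by
  have h1 := ht.1; have h2 := ht.2
  apply div_pos (by nlinarith) (by linarith)

lemma base_one_le {a t : ℝ} (ha : 0 ≤ a) (ht : t ∈ Ioo (0:ℝ) 1) :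
    1 ≤ (1 + t * a) / (1 - t) := by
  have h1 := ht.1; have h2 := ht.2
  rw [le_div_iff₀ (by linarith)]
  nlinarith

lemma exp_nonneg {d : ℕ} {t : ℝ} (ht : t ∈ Ioo (0:ℝ) 1) :
    (0:ℝ) ≤ 1 / (t * (d : ℝ)) :=
  div_nonneg zero_le_one (mul_nonneg ht.1.le (Nat.cast_nonneg d))

lemma elem_one_le {d : ℕ} {a t : ℝ} (ha : 0 ≤ a) (ht : t ∈ Ioo (0:ℝ) 1) :
    1 ≤ ((1 + t * a) / (1 - t)) ^ (1 / (t * (d : ℝ))) := by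
  calc (1:ℝ) = 1 ^ (1 / (t * (d:ℝ))) := (Real.one_rpow _).symm
  _ ≤ _ := Real.rpow_le_rpow zero_le_one (base_one_le ha ht) (exp_nonneg ht)

lemma Sset_nonempty (d : ℕ) (a : ℝ) : (Sset d a).Nonempty :=
  (Set.nonempty_Ioo.mpr (by norm_num : (0:ℝ) < 1)).image _

lemma Sset_bddBelow {d : ℕ} {a : ℝ} (ha : 0 ≤ a) : BddBelow (Sset d a) := by
  refine ⟨1, ?_⟩
  rintro x ⟨t, ht, rfl⟩
  exact elem_one_le ha ht

lemma Ffun_one_le {d : ℕ} {a : ℝ} (ha : 0 ≤ a) : 1 ≤ Ffun d a := by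
  apply le_csInf (Sset_nonempty d a)
  rintro x ⟨t, ht, rfl⟩
  exact elem_one_le ha ht

lemma Ffun_mono {d : ℕ} {a b : ℝ} (ha : 0 ≤ a) (hab : a ≤ b) :
    Ffun d a ≤ Ffun d b := by
  apply le_csInf (Sset_nonempty d b)
  rintro x ⟨t, ht, rfl⟩
  have h1 := ht.1; have h2 := ht.2
  calc Ffun d a ≤ ((1 + t * a) / (1 - t)) ^ (1 / (t * (d:ℝ))) :=
        csInf_le (Sset_bddBelow ha) ⟨t, ht, rfl⟩
  _ ≤ ((1 + t * b) / (1 - t)) ^ (1 / (t * (d:ℝ))) := by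
        apply Real.rpow_le_rpow (base_pos ha ht).le ?_ (exp_nonneg ht)
        apply div_le_div_of_nonneg_right ?_ (by linarith)
        nlinarith

lemma Ffun_double_ge {d : ℕ} {a : ℝ} (hd : d ≠ 0) (ha : 0 ≤ a) :
    Real.sqrt (Ffun d a) ≤ Ffun (2 * d) a := by
  apply le_csInf (Sset_nonempty _ a)
  rintro x ⟨t, ht, rfl⟩
  have hb := (base_pos ha ht).le
  have hsq : (((1 + t * a) / (1 - t)) ^ (1 / (t * ((2 * d : ℕ):ℝ)))) ^ (2:ℕ)
      = ((1 + t * a) / (1 - t)) ^ (1 / (t * (d:ℝ))) := by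
    rw [← Real.rpow_natCast _ 2, ← Real.rpow_mul hb]
    congr 1
    have ht0 : t ≠ 0 := ne_of_gt ht.1
    have hd0 : (d:ℝ) ≠ 0 := Nat.cast_ne_zero.mpr hd
    push_cast
    field_simp
  have hx : Ffun d a ≤ (((1 + t * a) / (1 - t)) ^ (1 / (t * ((2 * d : ℕ):ℝ)))) ^ (2:ℕ) := by
    rw [hsq]
    exact csInf_le (Sset_bddBelow ha) ⟨t, ht, rfl⟩
  calc Real.sqrt (Ffun d a)
      ≤ Real.sqrt ((((1 + t * a) / (1 - t)) ^ (1 / (t * ((2 * d : ℕ):ℝ)))) ^ (2:ℕ)) :=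
        Real.sqrt_le_sqrt hx
  _ = _ := by
        rw [sq]
        exact Real.sqrt_mul_self (Real.rpow_nonneg hb _)

lemma one_le_gfun (d : ℕ) (l : ℕ) : 1 ≤ gfun d l := by
  induction l with
  | zero => simp [gfun]
  | succ l ih =>
      rw [gfun_succ]
      have := Ffun_one_le (d := d) (a := gfun d l) (by linarith)
      nlinarith

/-- For every `d ≥ 2` and every `l ≥ 0`, `g_{2d}(2l) ≥ g_d(l)`. -/
theorem gfun_double (d : ℕ) (hd : 2 ≤ d) (l : ℕ) : gfun (2 * d) (2 * l) ≥ gfun d l := by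
  have hd0 : d ≠ 0 := by omega
  induction l with
  | zero => simp [gfun]
  | succ l ih =>
      have h2l : 2 * (l + 1) = (2 * l + 1) + 1 := by ring
      rw [h2l, gfun_succ, gfun_succ]
      set a := gfun (2 * d) (2 * l) with ha_def
      set b := gfun d l with hb_def
      have hb1 : 1 ≤ b := one_le_gfun d l
      have ha1 : 1 ≤ a := one_le_gfun (2 * d) (2 * l)
      have hab : b ≤ a := ih
      have hFa1 : 1 ≤ Ffun (2 * d) a := Ffun_one_le (by linarith)
      have hc1 : a ≤ a * Ffun (2 * d) a := le_mul_of_one_le_right (by linarith) hFa1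
      set c := a * Ffun (2 * d) a with hc_def
      have hbc : b ≤ c := le_trans hab hc1
      have hs : Real.sqrt (Ffun d b) ≤ Ffun (2 * d) a :=
        le_trans (Ffun_double_ge hd0 (by linarith)) (Ffun_mono (by linarith) hab)
      have hs' : Real.sqrt (Ffun d b) ≤ Ffun (2 * d) c :=
        le_trans (Ffun_double_ge hd0 (by linarith)) (Ffun_mono (by linarith) hbc)
      have hF1 : 1 ≤ Ffun d b := Ffun_one_le (by linarith)
      have hsqsq : Real.sqrt (Ffun d b) * Real.sqrt (Ffun d b) = Ffun d b :=
        Real.mul_self_sqrt (by linarith)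
      have hsnn : 0 ≤ Real.sqrt (Ffun d b) := Real.sqrt_nonneg _
      calc b * Ffun d b = (b * Real.sqrt (Ffun d b)) * Real.sqrt (Ffun d b) := by
            rw [mul_assoc, hsqsq]
      _ ≤ c * Ffun (2 * d) c := by
            apply mul_le_mul ?_ hs' hsnn (by nlinarith)
            calc b * Real.sqrt (Ffun d b) ≤ a * Ffun (2 * d) a :=
              mul_le_mul hab hs hsnn (by linarith)
            _ = c := rfl
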